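/- arXiv:0710.3786 — 3 statements merged into one kernel-verified Lean document; each statement's English description precedes it below -/
import Mathlib

section
/- If Δ(α, γ) ≡ 0 (mod 1) implies Δ(γ, β) ≥ 2 for all slopes γ ≠ ±β, then taking γ = β* with α = β + 2β* and Δ(β, β*) = 1 yields a contradiction; hence the filling slope α cannot have type O(1). -/
/-- The determinant (intersection) pairing on ℤ². -/
def intPair (x y : ℤ × ℤ) : ℤ := x.1 * y.2 - x.2 * y.1

theorem intPair_anticomm (x y : ℤ × ℤ) : intPair y x = -intPair x y := by
  unfold intPair; ring

theorem intPair_self (x : ℤ × ℤ) : intPair x x = 0 := by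
  unfold intPair; ring

theorem intPair_neg_right (x y : ℤ × ℤ) : intPair x (-y) = -intPair x y := by
  simp only [intPair, Prod.fst_neg, Prod.snd_neg]; ring

theorem abs_intPair_comm (x y : ℤ × ℤ) : |intPair y x| = |intPair x y| := by
  rw [intPair_anticomm, abs_neg]

theorem ne_of_abs_intPair_eq_one {x y : ℤ × ℤ} (h : |intPair x y| = 1) : y ≠ x := by
  rintro rfl
  simp [intPair_self] at h

theorem ne_neg_of_abs_intPair_eq_one {x y : ℤ × ℤ} (h : |intPair x y| = 1) : y ≠ -x := by
  rintro rfl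
  simp [intPair_neg_right, intPair_self] at h

theorem stmt_11_general (β βs α : ℤ × ℤ) (hβs : IsCoprime βs.1 βs.2)
    (hpair : |intPair β βs| = 1)
    (H : ∀ γ : ℤ × ℤ, IsCoprime γ.1 γ.2 → γ ≠ β → γ ≠ -β →
      |intPair α γ| % 1 = 0 → 2 ≤ |intPair γ β|) : False := by
  have hdist : 2 ≤ |intPair βs β| :=
    H βs hβs (ne_of_abs_intPair_eq_one hpair) (ne_neg_of_abs_intPair_eq_one hpair)
      (Int.emod_one _)
  rw [abs_intPair_comm, hpair] at hdist
  omega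

/-- If every slope γ ≠ ±β with Δ(α,γ) ≡ 0 (mod 1) satisfies Δ(γ,β) ≥ 2, then
taking γ = β*, where α = β + 2β* and Δ(β,β*) = 1, gives a contradiction; hence
α cannot be of type O(1). -/
theorem stmt_11 (β βs α : ℤ × ℤ) (hβs : IsCoprime βs.1 βs.2)
    (hpair : |intPair β βs| = 1) (hα : α = β + 2 • βs)
    (H : ∀ γ : ℤ × ℤ, IsCoprime γ.1 γ.2 → γ ≠ β → γ ≠ -β →
      |intPair α γ| % 1 = 0 → 2 ≤ |intPair γ β|) : False :=
  stmt_11_general β βs α hβs hpair H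
end

section
/- Let H be the abelian group with generators a₁, b₁, x₁, a₂, b₂, x₂ and relations 2x₁ = a₁ + b₁, 3x₂ = a₂ + b₂, a₁ = a₂, b₁ = b₂, b₁ = a₂ (gluing case (a)). Then H ⊗ Z/3 ≅ Z/3. -/
/-!
Write `a` for the common image of `a₁ = a₂ = b₁ = b₂` in `H/3H = H ⊗ ℤ/3`. The second relation
gives `2a = 3x₂ = 0`, so `a = 0` because `3a = 0`; then the first gives `2x₁ = 0`, so `x₁ = 0`.
Hence `H ⊗ ℤ/3` is generated by `x₂`, and it is exactly `ℤ/3` because the `x₂`-coefficient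
modulo 3 vanishes on every relation, hence is a homomorphism `H → ℤ/3` taking `x₂` to `1`.
-/

open TensorProduct

section
variable {M : Type*} [AddCommGroup M] {n : ℕ}

lemma natCast_smul_tmul_zmod_eq_zero (m : M) (c : ZMod n) : (n : ℤ) • (m ⊗ₜ[ℤ] c) = 0 := by
  rw [← tmul_smul, zsmul_eq_mul, Int.cast_natCast, ZMod.natCast_self, zero_mul, tmul_zero]

noncomputable def tensorZModEquiv (φ : M →ₗ[ℤ] ZMod n) (e : M) (he : φ e = 1)
    (h : ∀ m : M, m ⊗ₜ[ℤ] (1 : ZMod n) = e ⊗ₜ φ m) : M ⊗[ℤ] ZMod n ≃+ ZMod n where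
  toFun := lift ((LinearMap.mul ℤ (ZMod n)).comp φ)
  invFun c := e ⊗ₜ c
  left_inv t := by
    induction t using TensorProduct.induction_on with
    | zero => simp
    | tmul m c =>
      obtain ⟨k, rfl⟩ := ZMod.intCast_surjective c
      calc e ⊗ₜ[ℤ] (φ m * k) = k • (e ⊗ₜ[ℤ] φ m) := by
            rw [← tmul_smul, zsmul_eq_mul, mul_comm]
        _ = m ⊗ₜ[ℤ] (k : ZMod n) := by
            rw [← h, ← tmul_smul, zsmul_eq_mul, mul_one]
    | add x y hx hy => simp only [map_add, tmul_add, hx, hy]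
  right_inv c := by simp [he]
  map_add' := map_add _

end

namespace GluingCaseA

abbrev relations : Set (Fin 6 → ℤ) :=
  {![1, 1, -2, 0, 0, 0], ![0, 0, 0, 1, 1, -3], ![1, 0, 0, -1, 0, 0],
    ![0, 1, 0, 0, -1, 0], ![0, 1, 0, -1, 0, 0]}

abbrev H := (Fin 6 → ℤ) ⧸ Submodule.span ℤ relations

abbrev gen (i : Fin 6) : H := Submodule.Quotient.mk (Pi.single i 1)

lemma mk_eq_sum_gen (v : Fin 6 → ℤ) : (Submodule.Quotient.mk v : H) = ∑ i, v i • gen i := by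
  conv_lhs => rw [pi_eq_sum_univ' v]
  simp only [← Submodule.mkQ_apply, map_sum, map_smul]

lemma sum_smul_gen_tmul_one_eq_zero {r : Fin 6 → ℤ} (hr : r ∈ relations) :
    ∑ i, r i • (gen i ⊗ₜ[ℤ] (1 : ZMod 3)) = 0 := by
  simp_rw [smul_tmul', ← sum_tmul, ← mk_eq_sum_gen]
  rw [(Submodule.Quotient.mk_eq_zero _).mpr (Submodule.subset_span hr), zero_tmul]

lemma gen_tmul_one_eq_zero {i : Fin 6} (hi : i ≠ 5) : gen i ⊗ₜ[ℤ] (1 : ZMod 3) = 0 := by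
  have h1 := sum_smul_gen_tmul_one_eq_zero (r := ![1, 1, -2, 0, 0, 0]) (by simp)
  have h2 := sum_smul_gen_tmul_one_eq_zero (r := ![0, 0, 0, 1, 1, -3]) (by simp)
  have h3 := sum_smul_gen_tmul_one_eq_zero (r := ![1, 0, 0, -1, 0, 0]) (by simp)
  have h4 := sum_smul_gen_tmul_one_eq_zero (r := ![0, 1, 0, 0, -1, 0]) (by simp)
  have h5 := sum_smul_gen_tmul_one_eq_zero (r := ![0, 1, 0, -1, 0, 0]) (by simp)
  simp only [Fin.sum_univ_six, Fin.isValue, Matrix.cons_val_zero, Matrix.cons_val_one,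
    Matrix.cons_val, one_smul, neg_smul, zero_smul, add_zero, zero_add] at h1 h2 h3 h4 h5
  have z (j : Fin 6) : (3 : ℤ) • (gen j ⊗ₜ[ℤ] (1 : ZMod 3)) = 0 :=
    natCast_smul_tmul_zmod_eq_zero (gen j) 1
  have t3 : gen 3 ⊗ₜ[ℤ] (1 : ZMod 3) = 0 := by
    linear_combination (norm := module) z 3 - h2 - z 5 - h4 + h5
  have t0 : gen 0 ⊗ₜ[ℤ] (1 : ZMod 3) = 0 := by linear_combination (norm := module) h3 + t3
  have t1 : gen 1 ⊗ₜ[ℤ] (1 : ZMod 3) = 0 := by linear_combination (norm := module) h5 + t3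
  have t2 : gen 2 ⊗ₜ[ℤ] (1 : ZMod 3) = 0 := by
    linear_combination (norm := module) z 2 + h1 - h3 - h5 - (2 : ℤ) • t3
  have t4 : gen 4 ⊗ₜ[ℤ] (1 : ZMod 3) = 0 := by linear_combination (norm := module) h5 - h4 + t3
  fin_cases i <;> first | assumption | exact absurd rfl hi

noncomputable def x₂CoeffMod3 : H →ₗ[ℤ] ZMod 3 :=
  (Submodule.span ℤ relations).liftQ
    ((Int.castRingHom (ZMod 3)).toAddMonoidHom.toIntLinearMap.comp (LinearMap.proj 5)) <| by
      rw [Submodule.span_le]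
      rintro r (rfl | rfl | rfl | rfl | rfl) <;> simp
      decide

lemma x₂CoeffMod3_gen (i : Fin 6) : x₂CoeffMod3 (gen i) = if i = 5 then 1 else 0 := by
  simp [x₂CoeffMod3, Pi.single_apply, eq_comm]

lemma tmul_one_eq_gen_five_tmul (m : H) : m ⊗ₜ[ℤ] (1 : ZMod 3) = gen 5 ⊗ₜ x₂CoeffMod3 m := by
  suffices (TensorProduct.mk ℤ H (ZMod 3)).flip 1 =
      (TensorProduct.mk ℤ H (ZMod 3) (gen 5)).comp x₂CoeffMod3 from
    LinearMap.congr_fun this m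
  ext i
  by_cases hi : i = 5
  · subst hi
    simp [x₂CoeffMod3_gen]
  · simp [x₂CoeffMod3_gen, hi, gen_tmul_one_eq_zero hi]

end GluingCaseA

/-- The abelian group H = ⟨a₁,b₁,x₁,a₂,b₂,x₂ | 2x₁ = a₁+b₁, 3x₂ = a₂+b₂,
a₁ = a₂, b₁ = b₂, b₁ = a₂⟩ (gluing case (a)) satisfies H ⊗ ℤ/3 ≅ ℤ/3.
Generators indexed a₁=0, b₁=1, x₁=2, a₂=3, b₂=4, x₂=5. -/
theorem stmt_18 :
    Nonempty ((((Fin 6 → ℤ) ⧸ Submodule.span ℤ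
      ({![1, 1, -2, 0, 0, 0], ![0, 0, 0, 1, 1, -3], ![1, 0, 0, -1, 0, 0],
        ![0, 1, 0, 0, -1, 0], ![0, 1, 0, -1, 0, 0]} : Set (Fin 6 → ℤ)))
      ⊗[ℤ] (ZMod 3)) ≃+ ZMod 3) :=
  ⟨tensorZModEquiv GluingCaseA.x₂CoeffMod3 (GluingCaseA.gen 5)
    (by simp [GluingCaseA.x₂CoeffMod3_gen]) GluingCaseA.tmul_one_eq_gen_five_tmul⟩
end

section
/- Let H be the abelian group with generators a₁, b₁, x₁, a₂, b₂, x₂ and relations 2x₁ = a₁ + b₁, 3x₂ = a₂ + b₂, a₁ = a₂, b₁ = -b₂, b₁ = a₂ (gluing case (d)). Then H ⊗ Z/3 ≅ Z/3 ⊕ Z/3, and hence H is not isomorphic to Z ⊕ Z/2. -/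
/-!
Index the generators as `a₁, b₁, x₁, a₂, b₂, x₂ = 0, …, 5` and write `a = a₁ = a₂ = b₁`.
Then `b₂ = -a`, the first relation becomes `2 (x₁ - a) = 0` and the second `3 x₂ = 0`, so
`H ≅ (ℤ ⊕ ℤ/2) ⊕ ℤ/3` via `a, x₁ - a, x₂`. Tensoring with `ℤ/3` kills `ℤ/2`, hence
`H ⊗ ℤ/3 ≅ ℤ/3 ⊕ ℤ/3` has nine elements, while `(ℤ ⊕ ℤ/2) ⊗ ℤ/3 ≅ ℤ/3` has three.
-/

open TensorProduct

theorem ZMod.subsingleton_tensorProduct_of_coprime {m n : ℕ} (h : m.Coprime n) :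
    Subsingleton (ZMod m ⊗[ℤ] ZMod n) := by
  refine subsingleton_of_forall_eq 0 fun t ↦ ?_
  have htorsion : m • t = 0 ∧ n • t = 0 := by
    induction t using TensorProduct.induction_on with
    | zero => simp
    | tmul a b =>
      rw [smul_tmul', ← tmul_smul, nsmul_eq_mul, nsmul_eq_mul, ZMod.natCast_self,
        ZMod.natCast_self, zero_mul, zero_mul, zero_tmul, tmul_zero]
      exact ⟨rfl, rfl⟩
    | add x y hx hy => simp only [smul_add, hx.1, hx.2, hy.1, hy.2, add_zero, and_self]
  rw [← AddMonoid.addOrderOf_eq_one_iff, ← Nat.dvd_one, ← h.gcd_eq_one]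
  exact Nat.dvd_gcd (addOrderOf_dvd_of_nsmul_eq_zero htorsion.1)
    (addOrderOf_dvd_of_nsmul_eq_zero htorsion.2)

noncomputable def ZMod.tensorProductSelf (n : ℕ) : ZMod n ⊗[ℤ] ZMod n ≃ₗ[ℤ] ZMod n :=
  .ofBijective _ (LinearMap.mul'_bijective_of_surjective ℤ (ZMod n) ZMod.intCast_surjective)

noncomputable def intProdZModTensorZModEquiv {m n : ℕ} (h : m.Coprime n) :
    (ℤ × ZMod m) ⊗[ℤ] ZMod n ≃ₗ[ℤ] ZMod n :=
  haveI := ZMod.subsingleton_tensorProduct_of_coprime h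
  haveI : Unique (ZMod m ⊗[ℤ] ZMod n) := uniqueOfSubsingleton 0
  TensorProduct.prodLeft ℤ ℤ _ _ _ ≪≫ₗ .prodUnique ≪≫ₗ TensorProduct.lid ℤ (ZMod n)

namespace GluingCaseD

abbrev relations : Submodule ℤ (Fin 6 → ℤ) := Submodule.span ℤ
  ({![1, 1, -2, 0, 0, 0], ![0, 0, 0, 1, 1, -3], ![1, 0, 0, -1, 0, 0],
    ![0, 1, 0, 0, 1, 0], ![0, 1, 0, -1, 0, 0]} : Set (Fin 6 → ℤ))

abbrev H := (Fin 6 → ℤ) ⧸ relations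

lemma linearCombination_mem_relations (c₁ c₂ c₃ c₄ c₅ : ℤ) :
    c₁ • ![1, 1, -2, 0, 0, 0] + c₂ • ![0, 0, 0, 1, 1, -3] + c₃ • ![1, 0, 0, -1, 0, 0]
      + c₄ • ![0, 1, 0, 0, 1, 0] + c₅ • ![0, 1, 0, -1, 0, 0] ∈ relations := by
  refine add_mem (add_mem (add_mem (add_mem ?_ ?_) ?_) ?_) ?_ <;>
    exact Submodule.smul_mem _ _ (Submodule.subset_span (by simp))

def gen (i : Fin 6) : H := Submodule.Quotient.mk (Pi.single i 1)

lemma gen_one_eq_gen_zero : gen 1 = gen 0 := by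
  rw [gen, gen, Submodule.Quotient.eq]
  convert linearCombination_mem_relations 0 0 (-1) 0 1 using 1; decide

lemma gen_three_eq_gen_zero : gen 3 = gen 0 := by
  rw [gen, gen, Submodule.Quotient.eq]
  convert linearCombination_mem_relations 0 0 (-1) 0 0 using 1; decide

lemma gen_four_eq_neg_gen_zero : gen 4 = -gen 0 := by
  rw [gen, gen, eq_neg_iff_add_eq_zero, ← Submodule.Quotient.mk_add,
    Submodule.Quotient.mk_eq_zero]
  convert linearCombination_mem_relations 0 0 1 1 (-1) using 1; decide

lemma two_smul_gen_two_sub_gen_zero : (2 : ℤ) • (gen 2 - gen 0) = 0 := by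
  rw [gen, gen, ← Submodule.Quotient.mk_sub, ← Submodule.Quotient.mk_smul,
    Submodule.Quotient.mk_eq_zero]
  convert linearCombination_mem_relations (-1) 0 (-1) 0 1 using 1; decide

lemma three_smul_gen_five : (3 : ℤ) • gen 5 = 0 := by
  rw [gen, ← Submodule.Quotient.mk_smul, Submodule.Quotient.mk_eq_zero]
  convert linearCombination_mem_relations 0 (-1) 0 1 (-1) using 1; decide

def toProd : (Fin 6 → ℤ) →ₗ[ℤ] (ℤ × ZMod 2) × ZMod 3 where
  toFun v := ((v 0 + v 1 + v 2 + v 3 - v 4, v 2), v 5)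
  map_add' v w := by
    simp only [Pi.add_apply, Prod.mk_add_mk, Int.cast_add]
    congr 2
    ring
  map_smul' c v := by simp [mul_add, mul_sub]

lemma relations_le_ker_toProd : relations ≤ LinearMap.ker toProd := by
  rw [Submodule.span_le]
  rintro v (rfl | rfl | rfl | rfl | rfl) <;> simp [toProd] <;> decide

noncomputable def ofProd : (ℤ × ZMod 2) × ZMod 3 →+ H :=
  ((zmultiplesHom H (gen 0)).coprod
      (ZMod.lift 2 ⟨zmultiplesHom H (gen 2 - gen 0), two_smul_gen_two_sub_gen_zero⟩)).coprod
    (ZMod.lift 3 ⟨zmultiplesHom H (gen 5), three_smul_gen_five⟩)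

lemma ofProd_intCast (k l m : ℤ) :
    ofProd ((k, l), m) = k • gen 0 + l • (gen 2 - gen 0) + m • gen 5 := by
  simp [ofProd]

lemma mk_eq_sum_smul_gen (v : Fin 6 → ℤ) : (Submodule.Quotient.mk v : H) = ∑ i, v i • gen i := by
  have hv : ∑ i, v i • Pi.single i 1 = v := by
    simp_rw [← Pi.single_smul', smul_eq_mul, mul_one, Finset.univ_sum_single]
  conv_lhs => rw [← hv, ← Submodule.mkQ_apply, map_sum]
  simp only [map_zsmul, Submodule.mkQ_apply, gen]

noncomputable def equivProd : H ≃ₗ[ℤ] (ℤ × ZMod 2) × ZMod 3 :=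
  .ofLinearMap (relations.liftQ toProd relations_le_ker_toProd) ofProd.toIntLinearMap
    (by
      refine LinearMap.ext fun ⟨⟨k, s⟩, t⟩ ↦ ?_
      obtain ⟨s, rfl⟩ := ZMod.intCast_surjective s
      obtain ⟨t, rfl⟩ := ZMod.intCast_surjective t
      simp [ofProd_intCast, gen, toProd])
    (by
      refine LinearMap.ext fun h ↦ ?_
      obtain ⟨v, rfl⟩ := Submodule.Quotient.mk_surjective _ h
      change ofProd ((_, _), _) = _
      rw [ofProd_intCast, LinearMap.id_apply, mk_eq_sum_smul_gen, Fin.sum_univ_six,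
        gen_one_eq_gen_zero, gen_three_eq_gen_zero, gen_four_eq_neg_gen_zero]
      module)

noncomputable def tensorZModThreeEquiv : H ⊗[ℤ] ZMod 3 ≃ₗ[ℤ] ZMod 3 × ZMod 3 :=
  TensorProduct.congr equivProd (.refl ℤ (ZMod 3)) ≪≫ₗ TensorProduct.prodLeft ℤ ℤ _ _ _ ≪≫ₗ
    .prodCongr (intProdZModTensorZModEquiv (by norm_num)) (ZMod.tensorProductSelf 3)

end GluingCaseD

/-- The abelian group H = ⟨a₁,b₁,x₁,a₂,b₂,x₂ | 2x₁ = a₁+b₁, 3x₂ = a₂+b₂,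
a₁ = a₂, b₁ = -b₂, b₁ = a₂⟩ (gluing case (d)) satisfies
H ⊗ ℤ/3 ≅ ℤ/3 ⊕ ℤ/3, and hence H is not isomorphic to ℤ ⊕ ℤ/2.
Generators indexed a₁=0, b₁=1, x₁=2, a₂=3, b₂=4, x₂=5. -/
theorem stmt_19 :
    Nonempty ((((Fin 6 → ℤ) ⧸ Submodule.span ℤ
      ({![1, 1, -2, 0, 0, 0], ![0, 0, 0, 1, 1, -3], ![1, 0, 0, -1, 0, 0],
        ![0, 1, 0, 0, 1, 0], ![0, 1, 0, -1, 0, 0]} : Set (Fin 6 → ℤ)))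
      ⊗[ℤ] (ZMod 3)) ≃+ (ZMod 3 × ZMod 3)) ∧
    ¬ Nonempty (((Fin 6 → ℤ) ⧸ Submodule.span ℤ
      ({![1, 1, -2, 0, 0, 0], ![0, 0, 0, 1, 1, -3], ![1, 0, 0, -1, 0, 0],
        ![0, 1, 0, 0, 1, 0], ![0, 1, 0, -1, 0, 0]} : Set (Fin 6 → ℤ)))
      ≃+ (ℤ × ZMod 2)) := by
  refine ⟨⟨GluingCaseD.tensorZModThreeEquiv.toAddEquiv⟩, fun ⟨f⟩ ↦ ?_⟩
  have hcard : Nat.card (ZMod 3) = Nat.card (ZMod 3 × ZMod 3) :=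
    Nat.card_congr ((intProdZModTensorZModEquiv (by norm_num)).symm ≪≫ₗ
      TensorProduct.congr f.toIntLinearEquiv.symm (.refl ℤ (ZMod 3)) ≪≫ₗ
      GluingCaseD.tensorZModThreeEquiv).toEquiv
  simp at hcard
end
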